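/- arXiv:2403.14256 — 6 statements merged into one kernel-verified Lean document; each statement's English description precedes it below -/
import Mathlib

section
/- Let X be a weighted string of length n over a finite alphabet Σ and let H_X be a heavy string of X. Then for every string U of length j−i+1 (1 ≤ i ≤ j ≤ n), the occurrence probability of U at position i satisfies P(X[i..j] = U) ≤ 2^{−d_H(U, H_X[i..j])}, where d_H denotes Hamming distance. -/
/-!
A letter other than the heaviest one at a position has probability at most `1/2` there, since
together with the heaviest letter it carries at most the total mass `1`; any letter has
probability at most `1`. Multiplying these bounds over the window gives one factor `1/2` per
mismatch with the heavy string.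
-/

open Finset

section Distribution

variable {A : Type*} [Fintype A] {p : A → ℝ}

theorem le_one_of_sum_le_one (hp0 : ∀ a, 0 ≤ p a) (hp1 : ∑ a, p a ≤ 1) (a : A) : p a ≤ 1 :=
  (single_le_sum (fun a _ => hp0 a) (mem_univ a)).trans hp1

theorem le_half_of_ne_of_forall_le (hp0 : ∀ a, 0 ≤ p a) (hp1 : ∑ a, p a ≤ 1) {a b : A}
    (hb : ∀ c, p c ≤ p b) (hab : a ≠ b) : p a ≤ 1 / 2 := by
  have hpair : p a + p b ≤ 1 := by
    classical
    calc p a + p b = ∑ c ∈ {a, b}, p c := (sum_pair hab).symm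
      _ ≤ ∑ c, p c := sum_le_sum_of_subset_of_nonneg (subset_univ _) (fun c _ _ => hp0 c)
      _ ≤ 1 := hp1
  linarith [hb a]

theorem le_ite_half_of_forall_le [DecidableEq A] (hp0 : ∀ a, 0 ≤ p a) (hp1 : ∑ a, p a ≤ 1)
    {b : A} (hb : ∀ c, p c ≤ p b) (a : A) : p a ≤ if a = b then 1 else 1 / 2 := by
  split_ifs with hab
  · exact le_one_of_sum_le_one hp0 hp1 a
  · exact le_half_of_ne_of_forall_le hp0 hp1 hb hab

end Distribution

section HammingProduct

variable {ι A : Type*} [Fintype ι] [DecidableEq A]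

theorem prod_ite_eq_pow_hammingDist {M : Type*} [CommMonoid M] (u v : ι → A) (c : M) :
    ∏ h, (if u h = v h then 1 else c) = c ^ hammingDist u v := by
  rw [prod_ite, prod_const_one, one_mul, prod_const]
  rfl

theorem prod_le_pow_hammingDist {f : ι → ℝ} {u v : ι → A} {c : ℝ} (hf0 : ∀ h, 0 ≤ f h)
    (hf : ∀ h, f h ≤ if u h = v h then 1 else c) : ∏ h, f h ≤ c ^ hammingDist u v :=
  prod_ite_eq_pow_hammingDist u v c ▸ prod_le_prod (fun h _ => hf0 h) (fun h _ => hf h)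

end HammingProduct

/-- For a weighted string `X` of length `n` (given by probability
distributions `X i` for each position `i < n`, 0-indexed) with heavy string `H`,
the occurrence probability of any string `U` of length `m` at position `i`
(with `i + m ≤ n`) is at most `2 ^ (- hammingDist U H[i..i+m-1])`,
i.e. `(1/2) ^ hammingDist U H[i..i+m-1]`. -/
theorem occProb_le_half_pow_hammingDist {A : Type*} [Fintype A] [DecidableEq A]
    (n : ℕ) (X : ℕ → A → ℝ)
    (hX0 : ∀ i < n, ∀ a, 0 ≤ X i a)
    (hX1 : ∀ i < n, ∑ a, X i a = 1)
    (H : ℕ → A) (hH : ∀ i < n, ∀ a, X i a ≤ X i (H i))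
    (i m : ℕ) (him : i + m ≤ n) (U : Fin m → A) :
    ∏ h : Fin m, X (i + h.val) (U h) ≤
      (1 / 2 : ℝ) ^ hammingDist U (fun h : Fin m => H (i + h.val)) := by
  have hlt (h : Fin m) : i + h.val < n := by omega
  refine prod_le_pow_hammingDist (fun h => hX0 _ (hlt h) _) fun h => ?_
  exact le_ite_half_of_forall_le (hX0 _ (hlt h)) (hX1 _ (hlt h)).le (hH _ (hlt h)) (U h)
end

section
/- (Heavy-string mismatch bound, Lemma 3.4.) Let X be a weighted string of length n over a finite alphabet Σ, let H_X be a heavy string of X, and let 1/z ∈ (0,1] be a weight threshold. If U is a z-solid factor of X starting at position i and ending at position j (i.e., P(X[i..j] = U) ≥ 1/z), then d_H(U, H_X[i..j]) ≤ log₂ z. -/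
/-!
At a position where `U` differs from the heavy string, the letter of `U` and the heavy letter
are distinct and the latter is at least as likely, so the former has probability at most `1/2`.
Hence `1/z ≤ P(U) ≤ 2^(-d)` for the Hamming distance `d`, i.e. `2^d ≤ z`.
-/

open Finset

theorem apply_le_half_of_ne_of_forall_le {A : Type*} [Fintype A] {p : A → ℝ}
    (hp : p ∈ stdSimplex ℝ A) {a b : A} (hb : ∀ c, p c ≤ p b) (hab : a ≠ b) :
    p a ≤ 1 / 2 := by
  classical
  have hpair : p a + p b ≤ 1 := by
    rw [← sum_pair hab, ← hp.2]
    exact sum_le_univ_sum_of_nonneg hp.1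
  linarith [hb a]

theorem prod_le_pow_card_filter {ι : Type*} (s : Finset ι) (P : ι → Prop) [DecidablePred P]
    {f : ι → ℝ} {c : ℝ} (hf₀ : ∀ i ∈ s, 0 ≤ f i) (hf₁ : ∀ i ∈ s, f i ≤ 1)
    (hfc : ∀ i ∈ s, P i → f i ≤ c) :
    ∏ i ∈ s, f i ≤ c ^ #{i ∈ s | P i} := by
  calc ∏ i ∈ s, f i ≤ ∏ i ∈ s, if P i then c else 1 :=
        prod_le_prod hf₀ fun i hi => by split_ifs with h; exacts [hfc i hi h, hf₁ i hi]
    _ = c ^ #{i ∈ s | P i} := by rw [← prod_filter, prod_const]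

theorem natCast_le_logb_two_of_inv_le_half_pow {z : ℝ} (hz : 0 < z) {d : ℕ}
    (h : 1 / z ≤ (1 / 2) ^ d) : (d : ℝ) ≤ Real.logb 2 z := by
  rw [Real.le_logb_iff_rpow_le one_lt_two hz, Real.rpow_natCast]
  rwa [one_div_pow, one_div_le_one_div hz (by positivity)] at h

/-- Heavy-string mismatch bound, Lemma 3.4: if `U` is a `z`-solid
factor of the weighted string `X` at position `i` (0-indexed, of length `m` with
`i + m ≤ n`), i.e. its occurrence probability is at least `1/z`, then the Hamming
distance between `U` and the corresponding fragment of the heavy string `H` is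
at most `log₂ z`. -/
theorem hammingDist_le_logb_of_solid {A : Type*} [Fintype A] [DecidableEq A]
    (n : ℕ) (X : ℕ → A → ℝ)
    (hX0 : ∀ i < n, ∀ a, 0 ≤ X i a)
    (hX1 : ∀ i < n, ∑ a, X i a = 1)
    (H : ℕ → A) (hH : ∀ i < n, ∀ a, X i a ≤ X i (H i))
    (z : ℝ) (hz : 1 ≤ z)
    (i m : ℕ) (him : i + m ≤ n) (U : Fin m → A)
    (hsolid : 1 / z ≤ ∏ h : Fin m, X (i + h.val) (U h)) :
    (hammingDist U (fun h : Fin m => H (i + h.val)) : ℝ) ≤ Real.logb 2 z := by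
  have hlt (h : Fin m) : i + h.val < n := by omega
  have hX (h : Fin m) : X (i + h.val) ∈ stdSimplex ℝ A := ⟨hX0 _ (hlt h), hX1 _ (hlt h)⟩
  have hprod : ∏ h : Fin m, X (i + h.val) (U h) ≤
      (1 / 2) ^ hammingDist U (fun h : Fin m => H (i + h.val)) :=
    prod_le_pow_card_filter _ _ (fun h _ => (hX h).1 _)
      (fun h _ => (mem_Icc_of_mem_stdSimplex (hX h) _).2)
      (fun h _ => apply_le_half_of_ne_of_forall_le (hX h) (hH _ (hlt h)))
  exact natCast_le_logb_two_of_inv_le_half_pow (by linarith) (hsolid.trans hprod)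
end

section
/- (Corollary 3.6, reconstruction from mismatches.) Let X be a weighted string of length n over a finite alphabet Σ with heavy string H_X, and let 1/z ∈ (0,1] be a weight threshold. Every z-solid factor U of X occurring at positions i..j is uniquely determined by the triple (i, j, M), where M = {(h, U[h−i+1]) : i ≤ h ≤ j and U[h−i+1] ≠ H_X[h]} is its set of mismatches against H_X[i..j]; that is, if U and U′ are both z-solid factors at positions i..j with the same mismatch set M, then U = U′, and moreover |M| ≤ log₂ z. -/
/-!
A mismatched letter is not a most probable one, so its probability is at most `1/2`: together
with the heavy letter it takes up at most the total mass `1`. Hence a factor with `k` mismatches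
has probability at most `2⁻ᵏ`, and `1/z ≤ 2⁻ᵏ` gives `k ≤ log₂ z`. Uniqueness needs no
probabilities: off the mismatch set a factor agrees with the heavy string.
-/

open Finset

section Mismatches

variable {ι A : Type*} [Fintype ι] [DecidableEq ι] [DecidableEq A]

def mismatches (H U : ι → A) : Finset (ι × A) :=
  (univ.filter fun h => U h ≠ H h).image fun h => (h, U h)

theorem mem_mismatches {H U : ι → A} {h : ι} {a : A} :
    (h, a) ∈ mismatches H U ↔ U h = a ∧ a ≠ H h := by
  simp only [mismatches, mem_image, mem_filter, mem_univ, true_and, Prod.mk.injEq]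
  constructor
  · rintro ⟨h', hne, rfl, rfl⟩
    exact ⟨rfl, hne⟩
  · rintro ⟨rfl, hne⟩
    exact ⟨h, hne, rfl, rfl⟩

theorem eq_of_mismatches_eq {H U U' : ι → A} (hM : mismatches H U = mismatches H U') :
    U = U' := by
  funext h
  have hU := congrArg (fun M => (h, U h) ∈ M) hM
  have hU' := congrArg (fun M => (h, U' h) ∈ M) hM
  simp only [mem_mismatches, true_and, eq_iff_iff] at hU hU'
  grind

end Mismatches

section Distribution

variable {A : Type*} [Fintype A] {p : A → ℝ}

theorem le_one_of_sum_eq_one (hp0 : ∀ a, 0 ≤ p a) (hp1 : ∑ a, p a = 1) (a : A) : p a ≤ 1 :=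
  hp1 ▸ single_le_sum (fun b _ => hp0 b) (mem_univ a)

theorem le_half_of_ne_of_forall_le_s3 [DecidableEq A] (hp0 : ∀ a, 0 ≤ p a) (hp1 : ∑ a, p a = 1)
    {a₀ : A} (hmax : ∀ a, p a ≤ p a₀) {a : A} (ha : a ≠ a₀) : p a ≤ 1 / 2 := by
  have hpair : p a + p a₀ ≤ 1 := by
    rw [← sum_pair ha, ← hp1]
    exact sum_le_sum_of_subset_of_nonneg (subset_univ _) fun b _ _ => hp0 b
  linarith [hmax a]

end Distribution

theorem prod_le_pow_card_of_le_one {ι : Type*} [Fintype ι] [DecidableEq ι] {f : ι → ℝ}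
    {c : ℝ} (S : Finset ι) (hf0 : ∀ x, 0 ≤ f x) (hf1 : ∀ x, f x ≤ 1)
    (hS : ∀ x ∈ S, f x ≤ c) :
    ∏ x, f x ≤ c ^ S.card := by
  have hprodS : 0 ≤ ∏ x ∈ S, f x := prod_nonneg fun x _ => hf0 x
  calc ∏ x, f x = (∏ x ∈ S, f x) * ∏ x ∈ Sᶜ, f x := (prod_mul_prod_compl S f).symm
    _ ≤ ∏ x ∈ S, f x :=
      mul_le_of_le_one_right hprodS (prod_le_one (fun x _ => hf0 x) fun x _ => hf1 x)
    _ ≤ ∏ _x ∈ S, c := prod_le_prod (fun x _ => hf0 x) hS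
    _ = c ^ S.card := prod_const c

theorem natCast_le_logb_two_of_one_div_le {z : ℝ} (hz : 0 < z) {k : ℕ}
    (h : 1 / z ≤ (1 / 2) ^ k) : (k : ℝ) ≤ Real.logb 2 z := by
  rw [Real.le_logb_iff_rpow_le one_lt_two hz, Real.rpow_natCast]
  rw [one_div_pow] at h
  exact (one_div_le_one_div hz (by positivity)).1 h

theorem solid_factor_determined_by_mismatches_general {A : Type*} [Fintype A] [DecidableEq A]
    (n : ℕ) (X : ℕ → A → ℝ)
    (hX0 : ∀ i < n, ∀ a, 0 ≤ X i a)
    (hX1 : ∀ i < n, ∑ a, X i a = 1)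
    (H : ℕ → A) (hH : ∀ i < n, ∀ a, X i a ≤ X i (H i))
    (z : ℝ) (hz : 1 ≤ z)
    (i m : ℕ) (him : i + m ≤ n) (U U' : Fin m → A)
    (hU : 1 / z ≤ ∏ h : Fin m, X (i + h.val) (U h))
    (hM : (Finset.univ.filter (fun h : Fin m => U h ≠ H (i + h.val))).image
            (fun h => (h, U h)) =
          (Finset.univ.filter (fun h : Fin m => U' h ≠ H (i + h.val))).image
            (fun h => (h, U' h))) :
    U = U' ∧
      (((Finset.univ.filter (fun h : Fin m => U h ≠ H (i + h.val))).image
          (fun h => (h, U h))).card : ℝ) ≤ Real.logb 2 z := by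
  have hlt (h : Fin m) : i + h.val < n := by omega
  refine ⟨eq_of_mismatches_eq (H := fun h : Fin m => H (i + h.val)) hM, ?_⟩
  have hbound : 1 / z ≤ (1 / 2) ^ (univ.filter fun h : Fin m => U h ≠ H (i + h.val)).card :=
    hU.trans <| prod_le_pow_card_of_le_one _ (fun h => hX0 _ (hlt h) _)
      (fun h => le_one_of_sum_eq_one (hX0 _ (hlt h)) (hX1 _ (hlt h)) _)
      fun h hh => le_half_of_ne_of_forall_le_s3 (hX0 _ (hlt h)) (hX1 _ (hlt h)) (hH _ (hlt h))
        (mem_filter.1 hh).2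
  exact (Nat.cast_le.2 card_image_le).trans
    (natCast_le_logb_two_of_one_div_le (by linarith) hbound)

/-- Corollary 3.6, reconstruction from mismatches: a `z`-solid factor
`U` occurring at positions `i..i+m-1` (0-indexed) of a weighted string `X` with heavy
string `H` is uniquely determined by its set of mismatches
`M = {(h, U h) : U h ≠ H (i+h)}` against the corresponding fragment of `H`:
if `U` and `U'` are both `z`-solid at the same positions with the same mismatch set,
then `U = U'`; moreover `|M| ≤ log₂ z`. -/
theorem solid_factor_determined_by_mismatches {A : Type*} [Fintype A] [DecidableEq A]
    (n : ℕ) (X : ℕ → A → ℝ)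
    (hX0 : ∀ i < n, ∀ a, 0 ≤ X i a)
    (hX1 : ∀ i < n, ∑ a, X i a = 1)
    (H : ℕ → A) (hH : ∀ i < n, ∀ a, X i a ≤ X i (H i))
    (z : ℝ) (hz : 1 ≤ z)
    (i m : ℕ) (him : i + m ≤ n) (U U' : Fin m → A)
    (hU : 1 / z ≤ ∏ h : Fin m, X (i + h.val) (U h))
    (hU' : 1 / z ≤ ∏ h : Fin m, X (i + h.val) (U' h))
    (hM : (Finset.univ.filter (fun h : Fin m => U h ≠ H (i + h.val))).image
            (fun h => (h, U h)) =
          (Finset.univ.filter (fun h : Fin m => U' h ≠ H (i + h.val))).image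
            (fun h => (h, U' h))) :
    U = U' ∧
      (((Finset.univ.filter (fun h : Fin m => U h ≠ H (i + h.val))).image
          (fun h => (h, U h))).card : ℝ) ≤ Real.logb 2 z :=
  solid_factor_determined_by_mismatches_general n X hX0 hX1 H hH z hz i m him U U' hU hM
end

section
/- Let X be a weighted string of length n over a finite alphabet Σ and let 1/z ∈ (0,1] be a weight threshold with z ≥ 1. Fix a position i, and let F be any set of z-solid factors of X at position i that is prefix-free (no member of F is a prefix of another member of F). Then |F| ≤ ⌊z⌋. Consequently, at most ⌊z⌋ maximal z-solid factors start at any given position of X, where a z-solid factor U at position i is maximal if no string Uα (α ∈ Σ) is a z-solid factor at position i. -/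
namespace SolidAux

variable {A : Type*} [Fintype A] [DecidableEq A]

/-- Occurrence weight of a word starting at position `i`. -/
def wP (X : ℕ → A → ℝ) : ℕ → List A → ℝ
  | _, [] => 1
  | i, a :: U => X i a * wP X (i + 1) U

lemma wP_eq (X : ℕ → A → ℝ) : ∀ (U : List A) (i : ℕ),
    wP X i U = ∏ h : Fin U.length, X (i + h.val) (U.get h)
  | [], i => by simp [wP]
  | a :: U, i => by
      rw [wP, wP_eq X U (i + 1)]
      show X i a * (∏ h : Fin U.length, X (i + 1 + h.val) (U.get h))
        = ∏ h : Fin (U.length + 1), X (i + h.val) ((a :: U).get h)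
      rw [Fin.prod_univ_succ]
      simp only [Fin.val_zero, add_zero, List.get_eq_getElem, Fin.val_succ,
        List.getElem_cons_zero, List.getElem_cons_succ]
      congr 1
      apply Finset.prod_congr rfl
      intro h _
      congr 1
      omega

lemma wP_append (X : ℕ → A → ℝ) : ∀ (U V : List A) (i : ℕ),
    wP X i (U ++ V) = wP X i U * wP X (i + U.length) V
  | [], V, i => by simp [wP]
  | a :: U, V, i => by
      show X i a * wP X (i + 1) (U ++ V)
        = X i a * wP X (i + 1) U * wP X (i + (U.length + 1)) V
      rw [wP_append X U V (i + 1), show i + (U.length + 1) = i + 1 + U.length from by omega,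
        mul_assoc]

lemma wP_nonneg {n : ℕ} {X : ℕ → A → ℝ} (hX0 : ∀ i < n, ∀ a, 0 ≤ X i a) :
    ∀ (U : List A) (i : ℕ), i + U.length ≤ n → 0 ≤ wP X i U
  | [], i, _ => by simp [wP]
  | a :: U, i, h => by
      simp only [wP]
      have h1 : i < n := by simp at h; omega
      exact mul_nonneg (hX0 i h1 a) (wP_nonneg hX0 U (i + 1) (by simp at h ⊢; omega))

lemma wP_le_one {n : ℕ} {X : ℕ → A → ℝ} (hX0 : ∀ i < n, ∀ a, 0 ≤ X i a)
    (hX1 : ∀ i < n, ∑ a, X i a = 1) :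
    ∀ (U : List A) (i : ℕ), i + U.length ≤ n → wP X i U ≤ 1
  | [], i, _ => le_refl _
  | a :: U, i, h => by
      simp only [wP]
      have h1 : i < n := by simp at h; omega
      have hle : X i a ≤ 1 := by
        calc X i a ≤ ∑ b, X i b :=
          Finset.single_le_sum (fun b _ => hX0 i h1 b) (Finset.mem_univ a)
        _ = 1 := hX1 i h1
      have h2 : i + 1 + U.length ≤ n := by simp at h; omega
      exact mul_le_one₀ hle (wP_nonneg hX0 U (i+1) h2) (wP_le_one hX0 hX1 U (i+1) h2)

/-- Kraft-type inequality: prefix-free family has total weight at most 1. -/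
lemma kraft {n : ℕ} {X : ℕ → A → ℝ} (hX0 : ∀ i < n, ∀ a, 0 ≤ X i a)
    (hX1 : ∀ i < n, ∑ a, X i a = 1) :
    ∀ (m i : ℕ) (F : Finset (List A)), (∀ U ∈ F, U.length ≤ m) → i + m ≤ n →
    (∀ U ∈ F, ∀ V ∈ F, U ≠ V → ¬ U <+: V) →
    ∑ U ∈ F, wP X i U ≤ 1 := by
  intro m
  induction m with
  | zero =>
      intro i F hlen _ _
      have hsub : F ⊆ {[]} := by
        intro U hU
        have := hlen U hU
        simp [List.length_eq_zero_iff.mp (Nat.le_zero.mp this)]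
      rcases Finset.subset_singleton_iff.mp hsub with h | h <;> simp [h, wP]
  | succ m ih =>
      intro i F hlen hin hpf
      by_cases hnil : [] ∈ F
      · have hFeq : F = {[]} := by
          apply Finset.eq_singleton_iff_unique_mem.mpr
          refine ⟨hnil, fun V hV => ?_⟩
          by_contra hne
          exact hpf [] hnil V hV (Ne.symm hne) (List.nil_prefix)
        simp [hFeq, wP]
      · -- partition by head
        have hin' : i < n := by omega
        have key : ∑ U ∈ F, wP X i U
            = ∑ o : Option A, ∑ U ∈ F.filter (fun U => U.head? = o), wP X i U :=
          (Finset.sum_fiberwise_of_maps_to (fun U _ => Finset.mem_univ U.head?) _).symm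
        rw [key, Fintype.sum_option]
        have hnone : ∑ U ∈ F.filter (fun U => U.head? = none), wP X i U = 0 := by
          apply Finset.sum_eq_zero
          intro U hU
          simp only [Finset.mem_filter, List.head?_eq_none_iff] at hU
          exact absurd (hU.2 ▸ hU.1) hnil
        rw [hnone, zero_add]
        have hbound : ∀ a : A,
            ∑ U ∈ F.filter (fun U => U.head? = some a), wP X i U ≤ X i a := by
          intro a
          have hinj : ∀ U ∈ F.filter (fun U => U.head? = some a),
              ∀ V ∈ F.filter (fun U => U.head? = some a), U.tail = V.tail → U = V := by
            intro U hU V hV hUV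
            simp only [Finset.mem_filter] at hU hV
            rcases U with _ | ⟨u, U'⟩; · simp at hU
            rcases V with _ | ⟨v, V'⟩; · simp at hV
            simp at hU hV hUV
            simp [hU.2, hV.2, hUV]
          have himg : ∑ U ∈ F.filter (fun U => U.head? = some a), wP X i U
              = ∑ V ∈ (F.filter (fun U => U.head? = some a)).image List.tail,
                wP X i (a :: V) := by
            rw [Finset.sum_image hinj]
            apply Finset.sum_congr rfl
            intro U hU
            simp only [Finset.mem_filter] at hU
            rcases U with _ | ⟨u, U'⟩; · simp at hU
            have : u = a := by simpa using hU.2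
            simp [this]
          rw [himg]
          simp only [wP]
          rw [← Finset.mul_sum]
          have hsub : ∑ V ∈ (F.filter (fun U => U.head? = some a)).image List.tail,
              wP X (i+1) V ≤ 1 := by
            apply ih (i+1)
            · intro V hV
              simp only [Finset.mem_image, Finset.mem_filter] at hV
              obtain ⟨U, ⟨hUF, _⟩, hUV⟩ := hV
              have h1 := hlen U hUF
              have h2 : U.tail.length = U.length - 1 := List.length_tail
              subst hUV
              omega
            · omega
            · intro V hV W hW hne hpre
              simp only [Finset.mem_image, Finset.mem_filter] at hV hW
              obtain ⟨U1, ⟨hU1F, hU1h⟩, hU1V⟩ := hV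
              obtain ⟨U2, ⟨hU2F, hU2h⟩, hU2W⟩ := hW
              rcases U1 with _ | ⟨u1, U1'⟩; · simp at hU1h
              rcases U2 with _ | ⟨u2, U2'⟩; · simp at hU2h
              have hu1 : u1 = a := by simpa using hU1h
              have hu2 : u2 = a := by simpa using hU2h
              simp at hU1V hU2W
              subst hU1V; subst hU2W; subst hu1; subst hu2
              exact hpf _ hU1F _ hU2F (by simpa using hne)
                (List.cons_prefix_cons.mpr ⟨rfl, hpre⟩)
          calc X i a * ∑ V ∈ (F.filter (fun U => U.head? = some a)).image List.tail,
                wP X (i+1) V ≤ X i a * 1 :=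
                mul_le_mul_of_nonneg_left hsub (hX0 i hin' a)
            _ = X i a := mul_one _
        calc ∑ a : A, ∑ U ∈ F.filter (fun U => U.head? = some a), wP X i U
            ≤ ∑ a : A, X i a := Finset.sum_le_sum (fun a _ => hbound a)
          _ = 1 := hX1 i hin'

lemma card_bound {n : ℕ} {X : ℕ → A → ℝ} (hX0 : ∀ i < n, ∀ a, 0 ≤ X i a)
    (hX1 : ∀ i < n, ∑ a, X i a = 1) {z : ℝ} (hz : 1 ≤ z) (i : ℕ)
    (G : Finset (List A))
    (hG : ∀ U ∈ G, i + U.length ≤ n ∧ 1 / z ≤ wP X i U)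
    (hpf : ∀ U ∈ G, ∀ V ∈ G, U ≠ V → ¬ U <+: V) : G.card ≤ ⌊z⌋₊ := by
  have hz0 : (0 : ℝ) < z := lt_of_lt_of_le one_pos hz
  by_cases hne : G.Nonempty
  · obtain ⟨U0, hU0⟩ := hne
    have hin : i ≤ n := le_trans (Nat.le_add_right i _) (hG U0 hU0).1
    have hk : ∑ U ∈ G, wP X i U ≤ 1 :=
      kraft hX0 hX1 (n - i) i G (fun U hU => by have := (hG U hU).1; omega)
        (by omega) hpf
    have h1 : (G.card : ℝ) * (1 / z) ≤ ∑ U ∈ G, wP X i U := by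
      calc (G.card : ℝ) * (1 / z) = ∑ _U ∈ G, 1 / z := by
            rw [Finset.sum_const, nsmul_eq_mul]
        _ ≤ _ := Finset.sum_le_sum (fun U hU => (hG U hU).2)
    have h2 : (G.card : ℝ) ≤ z := by
      have := le_trans h1 hk
      rw [mul_one_div, div_le_one hz0] at this
      exact this
    exact Nat.le_floor h2
  · simp [Finset.not_nonempty_iff_eq_empty.mp hne]

end SolidAux


open SolidAux in
/-- for a weighted string `X` and weight threshold `1/z` with `z ≥ 1`,
any prefix-free set `F` of `z`-solid factors of `X` at a fixed position `i`
(0-indexed; a `z`-solid factor `U` at `i` satisfies `i + |U| ≤ n` and has occurrence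
probability at least `1/z`) has `|F| ≤ ⌊z⌋`; consequently at most `⌊z⌋` maximal
`z`-solid factors start at position `i`, where `U` is maximal if no `U ++ [α]`
is a `z`-solid factor at `i`. -/
theorem prefixFree_solid_card_le_floor {A : Type*} [Fintype A] [DecidableEq A]
    (n : ℕ) (X : ℕ → A → ℝ)
    (hX0 : ∀ i < n, ∀ a, 0 ≤ X i a)
    (hX1 : ∀ i < n, ∑ a, X i a = 1)
    (z : ℝ) (hz : 1 ≤ z) (i : ℕ)
    (F : Finset (List A))
    (hF : ∀ U ∈ F, i + U.length ≤ n ∧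
        1 / z ≤ ∏ h : Fin U.length, X (i + h.val) (U.get h))
    (hpf : ∀ U ∈ F, ∀ V ∈ F, U ≠ V → ¬ U <+: V) :
    F.card ≤ ⌊z⌋₊ ∧
    Nat.card {U : List A //
        (i + U.length ≤ n ∧ 1 / z ≤ ∏ h : Fin U.length, X (i + h.val) (U.get h)) ∧
        ∀ α : A, ¬ (i + (U ++ [α]).length ≤ n ∧
          1 / z ≤ ∏ h : Fin (U ++ [α]).length, X (i + h.val) ((U ++ [α]).get h))} ≤
      ⌊z⌋₊ := by
  have hweq : ∀ (j : ℕ) (U : List A),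
      (∏ h : Fin U.length, X (j + h.val) (U.get h)) = wP X j U :=
    fun j U => (wP_eq X U j).symm
  constructor
  · exact card_bound hX0 hX1 hz i F
      (fun U hU => ⟨(hF U hU).1, by rw [← hweq]; exact (hF U hU).2⟩) hpf
  · -- the set of maximal solid factors
    set S : Set (List A) := {U : List A |
        (i + U.length ≤ n ∧ 1 / z ≤ ∏ h : Fin U.length, X (i + h.val) (U.get h)) ∧
        ∀ α : A, ¬ (i + (U ++ [α]).length ≤ n ∧
          1 / z ≤ ∏ h : Fin (U ++ [α]).length, X (i + h.val) ((U ++ [α]).get h))}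
      with hS
    have hfin : S.Finite := by
      apply (List.finite_length_le A n).subset
      intro U hU
      have := hU.1.1
      simp only [Set.mem_setOf_eq]
      omega
    -- prefix of a solid factor is solid
    have hprefix_solid : ∀ U V : List A, U <+: V →
        (i + V.length ≤ n ∧ 1 / z ≤ wP X i V) →
        (i + U.length ≤ n ∧ 1 / z ≤ wP X i U) := by
      intro U V ⟨T, hT⟩ ⟨hlen, hw⟩
      subst hT
      rw [List.length_append] at hlen
      refine ⟨by omega, ?_⟩
      rw [wP_append] at hw
      calc 1 / z ≤ wP X i U * wP X (i + U.length) T := hw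
        _ ≤ wP X i U * 1 := mul_le_mul_of_nonneg_left
            (wP_le_one hX0 hX1 T (i + U.length) (by omega))
            (wP_nonneg hX0 U i (by omega))
        _ = wP X i U := mul_one _
    -- S is prefix-free
    have hSpf : ∀ U ∈ hfin.toFinset, ∀ V ∈ hfin.toFinset, U ≠ V → ¬ U <+: V := by
      intro U hU V hV hne hpre
      rw [Set.Finite.mem_toFinset] at hU hV
      obtain ⟨T, hT⟩ := hpre
      rcases T with _ | ⟨α, T'⟩
      · exact hne (by simpa using hT)
      · -- U ++ [α] is a prefix of V, hence solid, contradicting maximality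
        have hpre2 : U ++ [α] <+: V := ⟨T', by simp [← hT]⟩
        have hVsolid : i + V.length ≤ n ∧ 1 / z ≤ wP X i V :=
          ⟨hV.1.1, by rw [← hweq]; exact hV.1.2⟩
        have := hprefix_solid (U ++ [α]) V hpre2 hVsolid
        exact hU.2 α ⟨this.1, by rw [hweq]; exact this.2⟩
    have hcard : hfin.toFinset.card ≤ ⌊z⌋₊ := by
      apply card_bound hX0 hX1 hz i
      · intro U hU
        rw [Set.Finite.mem_toFinset] at hU
        exact ⟨hU.1.1, by rw [← hweq]; exact hU.1.2⟩
      · exact hSpf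
    calc Nat.card {U : List A // U ∈ S} = S.ncard := (Nat.card_coe_set_eq S)
      _ = hfin.toFinset.card := Set.ncard_eq_toFinset_card S hfin
      _ ≤ ⌊z⌋₊ := hcard
end

section
/- (Candidate completeness, core of Lemma 3.8.) Let X be a weighted string of length n over a finite alphabet Σ, let 1/z ∈ (0,1] be a weight threshold with z ≥ 1, let S = (S_j, π_j)_{j=1}^{⌊z⌋} be a z-estimation of X, and let f be an (ℓ,k)-minimizer scheme. Let P be a pattern of length m with ℓ ≤ m ≤ n and set μ = f(P[1..ℓ]). If P has a z-solid occurrence at position q in X (i.e., P(X[q..q+m−1] = P) ≥ 1/z), then there exists j ∈ [1, ⌊z⌋] such that: (i) P occurs at position q in S_j with q+m−1 ≤ π_j[q]; (ii) f(S_j[q..q+ℓ−1]) = μ, so the position i = q−1+μ is selected as a minimizer for the window of S_j starting at q; and (iii) P[μ..m] is a prefix of S_j[i..π_j[i]] and P[1..μ] equals S_j[q..i]. -/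
/-!
The z-estimation has exactly `⌊P(X[q..q+m-1] = P) · z⌋ ≥ 1` strings carrying a respecting
occurrence of `P` at `q`; pick one, `S_j`. Its window at `q` agrees with `P` on the first
`ℓ ≤ m` letters, so the minimizer scheme returns `μ = f P` there. As `μ ≤ ℓ - k < ℓ ≤ m`, the
occurrence splits at `q + μ` into `P[0..μ]` and `P[μ..m-1]`; the latter still respects
`π_j` because `π_j` is monotone.
-/

open Finset

theorem exists_of_card_filter_eq_floor {ι : Type*} [Fintype ι] {p : ι → Prop} [DecidablePred p]
    {w z : ℝ} (hz : 0 < z) (hw : 1 / z ≤ w) (hcard : #(univ.filter p) = ⌊w * z⌋₊) :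
    ∃ i, p i := by
  have hone : (1 : ℝ) ≤ w * z := (div_le_iff₀ hz).mp hw
  have hpos : 0 < #(univ.filter p) := hcard ▸ Nat.le_floor (by exact_mod_cast hone)
  obtain ⟨i, hi⟩ := card_pos.mp hpos
  exact ⟨i, (mem_filter.mp hi).2⟩

section Occurrence

variable {A : Type*}

def OccursAt (S P : ℕ → A) (m i : ℕ) : Prop :=
  ∀ h < m, S (i + h) = P h

variable {S P : ℕ → A} {m i : ℕ}

theorem OccursAt.mono {m' : ℕ} (hocc : OccursAt S P m i) (hm : m' ≤ m) : OccursAt S P m' i :=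
  fun h hh => hocc h (lt_of_lt_of_le hh hm)

theorem OccursAt.drop (hocc : OccursAt S P m i) (μ : ℕ) :
    OccursAt S (fun d => P (μ + d)) (m - μ) (i + μ) := fun d hd => by
  rw [Nat.add_assoc]
  exact hocc (μ + d) (by omega)

end Occurrence

theorem minimizer_candidate_completeness_general {A : Type*} [DecidableEq A]
    (n : ℕ) (X : ℕ → A → ℝ)
    (z : ℝ) (hz : 1 ≤ z)
    (S : Fin ⌊z⌋₊ → ℕ → A) (π : Fin ⌊z⌋₊ → ℕ → ℕ)
    (hπmono : ∀ j, ∀ i i' : ℕ, i ≤ i' → i' < n → π j i ≤ π j i')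
    (hest : ∀ (m : ℕ) (P : ℕ → A) (i : ℕ), i + m ≤ n →
      (Finset.univ.filter (fun j : Fin ⌊z⌋₊ =>
          (∀ h < m, S j (i + h) = P h) ∧ i + m ≤ π j i)).card =
        ⌊(∏ h ∈ Finset.range m, X (i + h) (P h)) * z⌋₊)
    (ℓ k : ℕ) (hk : 1 ≤ k) (hkl : k ≤ ℓ)
    (f : (ℕ → A) → ℕ)
    (hfrange : ∀ W : ℕ → A, f W ≤ ℓ - k)
    (hfext : ∀ W W' : ℕ → A, (∀ h < ℓ, W h = W' h) → f W = f W')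
    (m : ℕ) (P : ℕ → A) (hlm : ℓ ≤ m)
    (q : ℕ) (hqm : q + m ≤ n)
    (hsolid : 1 / z ≤ ∏ h ∈ Finset.range m, X (q + h) (P h)) :
    ∃ j : Fin ⌊z⌋₊,
      ((∀ h < m, S j (q + h) = P h) ∧ q + m ≤ π j q) ∧
      f (fun h => S j (q + h)) = f P ∧
      ((∀ d < m - f P, S j (q + f P + d) = P (f P + d)) ∧
        (q + f P) + (m - f P) ≤ π j (q + f P)) ∧
      (∀ d ≤ f P, S j (q + d) = P d) := by
  obtain ⟨j, hocc, hresp⟩ :=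
    exists_of_card_filter_eq_floor (by linarith) hsolid (hest m P q hqm)
  have hocc : OccursAt (S j) P m q := hocc
  have hμ : f P < m := by have := hfrange P; omega
  refine ⟨j, ⟨hocc, hresp⟩, hfext _ _ (hocc.mono hlm), ⟨hocc.drop (f P), ?_⟩,
    fun d hd => hocc.mono hμ d (Nat.lt_succ_of_le hd)⟩
  have hmono : π j q ≤ π j (q + f P) := hπmono j q _ (Nat.le_add_right _ _) (by omega)
  omega

/-- Candidate completeness, core of Lemma 3.8: let `(S j, π j)` be a
`z`-estimation of the weighted string `X` (`z ≥ 1`), and let `f` be an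
`(ℓ,k)`-minimizer scheme (0-indexed: `f W ∈ [0, ℓ−k]` is the position of the
leftmost occurrence of the smallest length-`k` substring of the length-`ℓ` window,
w.r.t. a fixed total order on `Σ^k` given by an injective rank function `rk`; `f`
depends only on the first `ℓ` letters). Let `P` be a pattern of length `m` with
`ℓ ≤ m ≤ n` and set `μ = f P`. If `P` has a `z`-solid occurrence at position `q`
in `X`, then some `j` satisfies: (i) `P` occurs at `q` in `S j` respecting `π j`;
(ii) the minimizer of the window of `S j` starting at `q` is also `μ` (so position
`i = q + μ` is selected); (iii) `P[μ..m-1]` is a prefix of `S j[i..π j i]` and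
`P[0..μ]` equals `S j[q..i]`. -/
theorem minimizer_candidate_completeness {A : Type*} [Fintype A] [DecidableEq A]
    (n : ℕ) (X : ℕ → A → ℝ)
    (hX0 : ∀ i < n, ∀ a, 0 ≤ X i a)
    (hX1 : ∀ i < n, ∑ a, X i a = 1)
    (z : ℝ) (hz : 1 ≤ z)
    (S : Fin ⌊z⌋₊ → ℕ → A) (π : Fin ⌊z⌋₊ → ℕ → ℕ)
    (hπ : ∀ j, ∀ i < n, i ≤ π j i ∧ π j i ≤ n)
    (hπmono : ∀ j, ∀ i i' : ℕ, i ≤ i' → i' < n → π j i ≤ π j i')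
    (hest : ∀ (m : ℕ) (P : ℕ → A) (i : ℕ), i + m ≤ n →
      (Finset.univ.filter (fun j : Fin ⌊z⌋₊ =>
          (∀ h < m, S j (i + h) = P h) ∧ i + m ≤ π j i)).card =
        ⌊(∏ h ∈ Finset.range m, X (i + h) (P h)) * z⌋₊)
    (ℓ k : ℕ) (hk : 1 ≤ k) (hkl : k ≤ ℓ)
    (f : (ℕ → A) → ℕ) (rk : (Fin k → A) → ℕ) (hrk : Function.Injective rk)
    (hfrange : ∀ W : ℕ → A, f W ≤ ℓ - k)
    (hfext : ∀ W W' : ℕ → A, (∀ h < ℓ, W h = W' h) → f W = f W')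
    (hfmin : ∀ W : ℕ → A,
      (∀ p ≤ ℓ - k, rk (fun d : Fin k => W (f W + d.val)) ≤
        rk (fun d : Fin k => W (p + d.val))) ∧
      (∀ p < f W, rk (fun d : Fin k => W (p + d.val)) ≠
        rk (fun d : Fin k => W (f W + d.val))))
    (m : ℕ) (P : ℕ → A) (hlm : ℓ ≤ m) (hmn : m ≤ n)
    (q : ℕ) (hqm : q + m ≤ n)
    (hsolid : 1 / z ≤ ∏ h ∈ Finset.range m, X (q + h) (P h)) :
    ∃ j : Fin ⌊z⌋₊,
      ((∀ h < m, S j (q + h) = P h) ∧ q + m ≤ π j q) ∧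
      f (fun h => S j (q + h)) = f P ∧
      ((∀ d < m - f P, S j (q + f P + d) = P (f P + d)) ∧
        (q + f P) + (m - f P) ≤ π j (q + f P)) ∧
      (∀ d ≤ f P, S j (q + d) = P d) :=
  minimizer_candidate_completeness_general n X z hz S π hπmono hest ℓ k hk hkl f hfrange hfext m P
    hlm q hqm hsolid
end

section
/- Let X be a weighted string of length n over a finite alphabet Σ of size σ ≥ 2 and let 1/z ∈ (0,1] be a weight threshold with z ≥ 1. For a pattern P chosen uniformly at random from Σ^m (with m ≤ n), the probability that P has at least one z-solid occurrence in X is at most (n−m+1)·⌊z⌋/σ^m ≤ n·z/σ^m. -/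
/-!
At a fixed position `i` the occurrence probabilities of all patterns of length `m` form a
probability distribution on `Σ^m`, so at most `⌊z⌋` patterns can have probability `≥ 1/z`
there. A union bound over the `n - m + 1` starting positions bounds the number of patterns
with a `z`-solid occurrence by `(n - m + 1)⌊z⌋`; dividing by `σ^m` gives the probability.
-/

open Finset

theorem card_filter_one_div_le_le_floor {ι : Type*} [Fintype ι] (w : ι → ℝ)
    (hw0 : ∀ x, 0 ≤ w x) (hw1 : ∑ x, w x ≤ 1) {z : ℝ} (hz : 0 < z)
    [DecidablePred fun x => 1 / z ≤ w x] :
    #{x | 1 / z ≤ w x} ≤ ⌊z⌋₊ := by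
  set s : Finset ι := {x | 1 / z ≤ w x}
  have hmass : #s * (1 / z) ≤ 1 :=
    calc #s * (1 / z) = #s • (1 / z) := (nsmul_eq_mul _ _).symm
      _ ≤ ∑ x ∈ s, w x := card_nsmul_le_sum s w _ fun x hx => (mem_filter.mp hx).2
      _ ≤ ∑ x, w x := sum_le_sum_of_subset_of_nonneg (subset_univ s) fun x _ _ => hw0 x
      _ ≤ 1 := hw1
  apply Nat.le_floor
  rwa [mul_one_div, div_le_one hz] at hmass

theorem sum_pi_prod_eq_one {ι α : Type*} [Fintype ι] [DecidableEq ι] [Fintype α]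
    (p : ι → α → ℝ) (hp : ∀ i, ∑ a, p i a = 1) :
    ∑ x : ι → α, ∏ i, p i (x i) = 1 := by
  rw [← Fintype.prod_sum, Fintype.prod_eq_one _ hp]

theorem card_le_card_mul_of_forall_exists {ι α : Type*} [Fintype α] [DecidableEq α]
    {s : Finset ι} {t : Finset α} (Q : ι → α → Prop) [∀ i, DecidablePred (Q i)]
    (hcover : ∀ x ∈ t, ∃ i ∈ s, Q i x) {b : ℕ} (hb : ∀ i ∈ s, #{x | Q i x} ≤ b) :
    #t ≤ #s * b := by
  have hsub : t ⊆ s.biUnion fun i => {x | Q i x} := fun x hx =>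
    let ⟨i, hi, hQ⟩ := hcover x hx
    mem_biUnion.mpr ⟨i, hi, mem_filter.mpr ⟨mem_univ x, hQ⟩⟩
  exact (card_le_card hsub).trans (card_biUnion_le_card_mul s _ b hb)

section WeightedString

variable {A : Type*} [Fintype A] {n : ℕ} {X : ℕ → A → ℝ}
  (hX0 : ∀ i < n, ∀ a, 0 ≤ X i a) (hX1 : ∀ i < n, ∑ a, X i a = 1) {z : ℝ} (hz : 0 < z)
  {m : ℕ}

include hX0 hX1 hz in
theorem card_solid_at_le_floor {i : ℕ} (hi : i + m ≤ n) :
    #{P : Fin m → A | 1 / z ≤ ∏ h : Fin m, X (i + h.val) (P h)} ≤ ⌊z⌋₊ := by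
  refine card_filter_one_div_le_le_floor _ (fun P => ?_) (sum_pi_prod_eq_one _ ?_).le hz
  · exact prod_nonneg fun h _ => hX0 _ (by omega) _
  · exact fun h => hX1 _ (by omega)

include hX0 hX1 hz in
theorem card_solid_le (hmn : m ≤ n) :
    Nat.card {P : Fin m → A // ∃ i : ℕ, i + m ≤ n ∧ 1 / z ≤ ∏ h : Fin m, X (i + h.val) (P h)} ≤
      (n - m + 1) * ⌊z⌋₊ := by
  classical
  rw [Nat.card_eq_fintype_card, Fintype.card_subtype, ← card_range (n - m + 1)]
  refine card_le_card_mul_of_forall_exists (s := range (n - m + 1))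
    (fun i (P : Fin m → A) => 1 / z ≤ ∏ h : Fin m, X (i + h.val) (P h)) ?_ fun i hi => ?_
  · intro P hP
    obtain ⟨i, hi, hsolid⟩ := (mem_filter.mp hP).2
    exact ⟨i, mem_range.mpr (by omega), hsolid⟩
  · exact card_solid_at_le_floor hX0 hX1 hz (by rw [mem_range] at hi; omega)

end WeightedString

theorem prob_random_pattern_solid_le_general {A : Type*} [Fintype A]
    (n : ℕ) (X : ℕ → A → ℝ)
    (hX0 : ∀ i < n, ∀ a, 0 ≤ X i a)
    (hX1 : ∀ i < n, ∑ a, X i a = 1)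
    (z : ℝ) (hz : 1 ≤ z)
    (m : ℕ) (hm : 1 ≤ m) (hmn : m ≤ n) :
    (Nat.card {P : Fin m → A //
        ∃ i : ℕ, i + m ≤ n ∧ 1 / z ≤ ∏ h : Fin m, X (i + h.val) (P h)} : ℝ)
        / (Fintype.card A : ℝ) ^ m ≤
      ((n : ℝ) - m + 1) * ⌊z⌋₊ / (Fintype.card A : ℝ) ^ m ∧
    ((n : ℝ) - m + 1) * ⌊z⌋₊ / (Fintype.card A : ℝ) ^ m ≤
      (n : ℝ) * z / (Fintype.card A : ℝ) ^ m := by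
  have hz0 : 0 < z := one_pos.trans_le hz
  have hcount := card_solid_le hX0 hX1 hz0 hmn
  have hcast : (((n - m + 1) * ⌊z⌋₊ : ℕ) : ℝ) = ((n : ℝ) - m + 1) * ⌊z⌋₊ := by
    push_cast [Nat.cast_sub hmn]
    ring
  have hm' : (1 : ℝ) ≤ m := by exact_mod_cast hm
  constructor
  · gcongr
    exact hcast ▸ (Nat.cast_le.mpr hcount)
  · gcongr
    · linarith
    · exact Nat.floor_le hz0.le

/-- for a weighted string `X` of length `n` over an alphabet of size
`σ ≥ 2` and a weight threshold `1/z` (`z ≥ 1`), the probability that a pattern `P`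
chosen uniformly at random from `Σ^m` (with `1 ≤ m ≤ n`) has at least one `z`-solid
occurrence in `X` is at most `(n − m + 1)·⌊z⌋/σ^m ≤ n·z/σ^m`. -/
theorem prob_random_pattern_solid_le {A : Type*} [Fintype A] [DecidableEq A]
    (hσ : 2 ≤ Fintype.card A)
    (n : ℕ) (X : ℕ → A → ℝ)
    (hX0 : ∀ i < n, ∀ a, 0 ≤ X i a)
    (hX1 : ∀ i < n, ∑ a, X i a = 1)
    (z : ℝ) (hz : 1 ≤ z)
    (m : ℕ) (hm : 1 ≤ m) (hmn : m ≤ n) :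
    (Nat.card {P : Fin m → A //
        ∃ i : ℕ, i + m ≤ n ∧ 1 / z ≤ ∏ h : Fin m, X (i + h.val) (P h)} : ℝ)
        / (Fintype.card A : ℝ) ^ m ≤
      ((n : ℝ) - m + 1) * ⌊z⌋₊ / (Fintype.card A : ℝ) ^ m ∧
    ((n : ℝ) - m + 1) * ⌊z⌋₊ / (Fintype.card A : ℝ) ^ m ≤
      (n : ℝ) * z / (Fintype.card A : ℝ) ^ m :=
  prob_random_pattern_solid_le_general n X hX0 hX1 z hz m hm hmn
end
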